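/- Let L have weights (2,2,p,q) and let x = Σ λ_i x_i + λ c ∈ S (i.e. in normal form 0 < 2λ + #{i : λ_i ≥ 1} ≤ #{3 ≤ i ≤ 4 : λ_i ∈ {0,1}}), with λ = −1, and let ℓ = Σ ℓ_i x_i ∈ [s, s+δ]. If for some index t one has 2c − ℓ + ℓ_t x_t − x ≥ 0, then λ_t = 0, λ_j ≥ 1 and λ_j + ℓ_j ≤ p_j for all j ≠ t, and moreover 2c − ℓ + ℓ_i x_i − x ≥ 0 fails for every i ≠ t. -/

import Mathlib

/-- The subgroup of relations `p i • x_i - c` in the free abelian group on `x_1,…,x_n,c`. -/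
def Lrel (n : ℕ) (p : Fin n → ℤ) : AddSubgroup ((Fin n → ℤ) × ℤ) :=
  AddSubgroup.closure {v | ∃ i : Fin n, v = (Pi.single i (p i), -1)}

/-- The Geigle-Lenzing group `L = ⟨x_1,…,x_n,c⟩ / ⟨p_i x_i - c⟩`. -/
abbrev Lgrp (n : ℕ) (p : Fin n → ℤ) : Type :=
  ((Fin n → ℤ) × ℤ) ⧸ Lrel n p

/-- The generator `x_i` of `L`. -/
def Lx (n : ℕ) (p : Fin n → ℤ) (i : Fin n) : Lgrp n p :=
  QuotientAddGroup.mk (Pi.single i 1, 0)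

/-- The canonical element `c` of `L`. -/
def Lc (n : ℕ) (p : Fin n → ℤ) : Lgrp n p :=
  QuotientAddGroup.mk (0, 1)

/-- The positive cone `L_+`, the submonoid generated by `x_1,…,x_n,c`. -/
def Lplus (n : ℕ) (p : Fin n → ℤ) : AddSubmonoid (Lgrp n p) :=
  AddSubmonoid.closure (Set.range (Lx n p) ∪ {Lc n p})

namespace GLpq

variable (p q : ℤ)

/-- The weight sequence `(2,2,p,q)`. -/
def w : Fin 4 → ℤ := ![2, 2, p, q]

/-- The generator `x_i`. -/
def X (i : Fin 4) : Lgrp 4 (w p q) := Lx 4 (w p q) i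

/-- The canonical element `c`. -/
def C : Lgrp 4 (w p q) := Lc 4 (w p q)

/-- The positive cone `L_+`. -/
def pos : AddSubmonoid (Lgrp 4 (w p q)) := Lplus 4 (w p q)

/-- The element `Σ l_i x_i`. -/
def elt (l : Fin 4 → ℤ) : Lgrp 4 (w p q) := ∑ t, l t • X p q t

/-- `s = x_1 + x_2 + x_3 + x_4`. -/
def s : Lgrp 4 (w p q) := ∑ t, X p q t

/-- The dualizing element `ω = c − s`. -/
def om : Lgrp 4 (w p q) := C p q - s p q

/-- The partial order: `a ≤ b` iff `b − a ∈ L_+`. -/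
def le (a b : Lgrp 4 (w p q)) : Prop := b - a ∈ pos p q

/-- The condition for `Σ l_i x_i` to lie in `[s, s+δ]`:
`l_1 = l_2 = 1`, `1 ≤ l_3 ≤ p−1`, `1 ≤ l_4 ≤ q−1`. -/
def inInterval (l : Fin 4 → ℤ) : Prop :=
  l 0 = 1 ∧ l 1 = 1 ∧ 1 ≤ l 2 ∧ l 2 ≤ p - 1 ∧ 1 ≤ l 3 ∧ l 3 ≤ q - 1

end GLpq

section NFaux

variable {n : ℕ} (P : Fin n → ℤ)

/-- The "degree of the c-part" of the normal form. -/
def nf (v : (Fin n → ℤ) × ℤ) : ℤ := v.2 + ∑ i, v.1 i / P i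

lemma nf_add_rel (hP : ∀ i, P i ≠ 0) {r : (Fin n → ℤ) × ℤ} (hr : r ∈ Lrel n P) :
    ∀ a, nf P (a + r) = nf P a := by
  induction hr using AddSubgroup.closure_induction with
  | mem x hx =>
    obtain ⟨i, rfl⟩ := hx
    intro a
    simp only [nf, Prod.snd_add, Prod.fst_add, Pi.add_apply]
    have hterm : ∀ j, (a.1 j + (Pi.single i (P i) : Fin n → ℤ) j) / P j
        = a.1 j / P j + (if j = i then 1 else 0) := by
      intro j
      by_cases h : j = i
      · subst h
        simp only [Pi.single_eq_same, if_pos rfl]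
        have := Int.add_mul_ediv_right (a.1 j) 1 (hP j)
        simpa using this
      · simp [Pi.single_eq_of_ne h, h]
    rw [Finset.sum_congr rfl (fun j _ => hterm j), Finset.sum_add_distrib]
    simp [Finset.sum_ite_eq']
    ring
  | zero => intro a; simp [nf]
  | add x y hx hy ihx ihy =>
    intro a
    rw [← add_assoc, ihy, ihx]
  | neg x hx ih =>
    intro a
    have := ih (a + -x)
    simpa using this.symm

/-- `nf` descends to the quotient. -/
def NF (hP : ∀ i, P i ≠ 0) : Lgrp n P → ℤ :=
  fun x => Quotient.liftOn' x (nf P) (by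
    intro a b h
    have h' : -a + b ∈ Lrel n P := QuotientAddGroup.leftRel_apply.mp h
    have := nf_add_rel P hP h' a
    simpa using this.symm)

lemma NF_mk (hP : ∀ i, P i ≠ 0) (v : (Fin n → ℤ) × ℤ) :
    NF P hP (QuotientAddGroup.mk v) = nf P v := rfl

lemma nf_superadd (hP : ∀ i, 0 < P i) (a b : (Fin n → ℤ) × ℤ) :
    nf P a + nf P b ≤ nf P (a + b) := by
  simp only [nf, Prod.snd_add, Prod.fst_add, Pi.add_apply]
  have : ∀ j ∈ Finset.univ, a.1 j / P j + b.1 j / P j ≤ (a.1 j + b.1 j) / P j := by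
    intro j _
    rw [Int.le_ediv_iff_mul_le (hP j), add_mul]
    exact add_le_add (Int.ediv_mul_le _ (hP j).ne') (Int.ediv_mul_le _ (hP j).ne')
  have hsum := Finset.sum_le_sum this
  rw [Finset.sum_add_distrib] at hsum
  omega

lemma NF_nonneg_of_pos (hP : ∀ i, 0 < P i) {y : Lgrp n P} (hy : y ∈ Lplus n P) :
    0 ≤ NF P (fun i => (hP i).ne') y := by
  induction hy using AddSubmonoid.closure_induction with
  | mem x hx =>
    rcases hx with ⟨i, rfl⟩ | hx
    · rw [Lx, NF_mk, nf]
      have : ∀ j ∈ Finset.univ, (0:ℤ) ≤ (Pi.single i (1:ℤ) : Fin n → ℤ) j / P j := by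
        intro j _
        refine Int.ediv_nonneg ?_ (hP j).le
        by_cases h : j = i
        · subst h; simp
        · simp [Pi.single_eq_of_ne h]
      have := Finset.sum_nonneg this
      simpa using this
    · simp only [Set.mem_singleton_iff] at hx
      subst hx
      rw [Lc, NF_mk, nf]
      simp
  | zero => rw [show (0 : Lgrp n P) = QuotientAddGroup.mk 0 from rfl, NF_mk]; simp [nf]
  | add x y hx hy ihx ihy =>
    induction x using QuotientAddGroup.induction_on with
    | H a =>
    induction y using QuotientAddGroup.induction_on with
    | H b =>
    rw [← QuotientAddGroup.mk_add, NF_mk]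
    have h1 := nf_superadd P hP a b
    rw [NF_mk] at ihx ihy
    omega

end NFaux

lemma negdiv {a P : ℤ} (hP : 0 < P) (h0 : 0 ≤ a) (h2 : a ≤ 2*P) :
    (-a)/P = if a = 0 then 0 else if a ≤ P then -1 else -2 := by
  split_ifs with h h'
  · subst h; simp
  · have e : -a = (P - a) + (-1)*P := by ring
    rw [e, Int.add_mul_ediv_right _ _ hP.ne', Int.ediv_eq_zero_of_lt (by omega) (by omega)]
    norm_num
  · have e : -a = (2*P - a) + (-2)*P := by ring
    rw [e, Int.add_mul_ediv_right _ _ hP.ne', Int.ediv_eq_zero_of_lt (by omega) (by omega)]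
    norm_num

namespace GLpq

lemma w_pos {p q : ℤ} (hp : 2 ≤ p) (hq : 2 ≤ q) : ∀ i, 0 < w p q i := by
  intro i; fin_cases i <;> simp [w] <;> omega

lemma smul_X_eq_mk (p q : ℤ) (t : Fin 4) (a : ℤ) :
    a • X p q t = QuotientAddGroup.mk ((Pi.single t a : Fin 4 → ℤ), (0:ℤ)) := by
  unfold X Lx
  have h : (QuotientAddGroup.mk ((Pi.single t 1 : Fin 4 → ℤ), (0:ℤ))
      : Lgrp 4 (w p q)) = QuotientAddGroup.mk' (Lrel 4 (w p q)) (Pi.single t 1, 0) := rfl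
  rw [h, ← map_zsmul]
  have harg : a • ((Pi.single t (1:ℤ) : Fin 4 → ℤ), (0:ℤ)) = (Pi.single t a, (0:ℤ)) := by
    rw [Prod.smul_mk, ← Pi.single_smul]
    simp
  rw [harg]
  rfl

lemma elt_eq_mk (p q : ℤ) (v : Fin 4 → ℤ) :
    elt p q v = QuotientAddGroup.mk (v, (0:ℤ)) := by
  unfold elt
  simp_rw [smul_X_eq_mk]
  have h : ∀ t : Fin 4, (QuotientAddGroup.mk ((Pi.single t (v t) : Fin 4 → ℤ), (0:ℤ))
      : Lgrp 4 (w p q)) = QuotientAddGroup.mk' (Lrel 4 (w p q)) (Pi.single t (v t), 0) :=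
    fun _ => rfl
  simp_rw [h, ← map_sum]
  have harg : (∑ t : Fin 4, ((Pi.single t (v t) : Fin 4 → ℤ), (0:ℤ))) = (v, (0:ℤ)) := by
    refine Prod.ext ?_ (by rw [Prod.snd_sum]; simp)
    rw [Prod.fst_sum]
    simpa using Finset.univ_sum_single v
  rw [harg]
  rfl

lemma elt_expr_eq_mk (p q : ℤ) (l lam : Fin 4 → ℤ) (t : Fin 4) :
    (2 : ℤ) • C p q - elt p q l + l t • X p q t - (elt p q lam - C p q)
      = QuotientAddGroup.mk ((Pi.single t (l t) : Fin 4 → ℤ) - l - lam, (3:ℤ)) := by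
  have hC : C p q = QuotientAddGroup.mk ((0 : Fin 4 → ℤ), (1:ℤ)) := rfl
  have h2C : (2:ℤ) • C p q = QuotientAddGroup.mk ((0 : Fin 4 → ℤ), (2:ℤ)) := by
    rw [hC, show (QuotientAddGroup.mk ((0 : Fin 4 → ℤ), (1:ℤ)) : Lgrp 4 (w p q))
      = QuotientAddGroup.mk' (Lrel 4 (w p q)) (0, 1) from rfl, ← map_zsmul]
    rfl
  rw [h2C, hC, elt_eq_mk, elt_eq_mk, smul_X_eq_mk,
    ← QuotientAddGroup.mk_sub, ← QuotientAddGroup.mk_sub, ← QuotientAddGroup.mk_add,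
    ← QuotientAddGroup.mk_sub]
  congr 1
  simp only [Prod.mk_sub_mk, Prod.mk_add_mk, Prod.mk.injEq]
  constructor
  · abel
  · norm_num

lemma l_bounds {p q : ℤ} (hp : 2 ≤ p) (hq : 2 ≤ q) {l : Fin 4 → ℤ}
    (hl : inInterval p q l) : ∀ i, 1 ≤ l i ∧ l i ≤ w p q i - 1 := by
  obtain ⟨h0, h1, h2, h3, h4, h5⟩ := hl
  intro i; fin_cases i <;> simp_all [w] <;> omega

lemma key {p q : ℤ} (hp : 2 ≤ p) (hq : 2 ≤ q) {lam : Fin 4 → ℤ}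
    (hlam : ∀ i, 0 ≤ lam i ∧ lam i < w p q i)
    {l : Fin 4 → ℤ} (hl : inInterval p q l) (t : Fin 4)
    (ht : (2 : ℤ) • C p q - elt p q l + l t • X p q t - (elt p q lam - C p q) ∈
      pos p q) :
    lam t = 0 ∧ ∀ j, j ≠ t → lam j + l j ≤ w p q j := by
  have hw := w_pos hp hq
  have hli := l_bounds hp hq hl
  have hNF := NF_nonneg_of_pos (w p q) hw (ht : _ ∈ Lplus 4 (w p q))
  rw [elt_expr_eq_mk, NF_mk] at hNF
  set f : Fin 4 → ℤ :=
    fun i => ((Pi.single t (l t) : Fin 4 → ℤ) i - l i - lam i) / w p q i with hf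
  have hNF' : 0 ≤ 3 + ∑ i, f i := by
    have he : nf (w p q) ((Pi.single t (l t) : Fin 4 → ℤ) - l - lam, (3:ℤ))
        = 3 + ∑ i, f i := by
      simp [nf, hf, Pi.sub_apply]
    rw [he] at hNF
    exact hNF
  -- value at t
  have hft0 : f t ≤ 0 ∧ (lam t ≠ 0 → f t ≤ -1) := by
    have e1 : f t = (-(lam t)) / w p q t := by
      simp only [hf, Pi.single_eq_same]
      congr 1
      ring
    rw [e1, negdiv (hw t) (hlam t).1 (by have := (hlam t).2; have := hw t; omega)]
    split_ifs <;> omega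
  -- value away from t
  have hfi : ∀ i, i ≠ t → f i ≤ -1 ∧ (w p q i < lam i + l i → f i ≤ -2) := by
    intro i hi
    have e1 : f i = (-(l i + lam i)) / w p q i := by
      simp only [hf, Pi.single_eq_of_ne hi]
      congr 1
      ring
    rw [e1, negdiv (hw i) (by have := (hli i).1; have := (hlam i).1; omega)
      (by have := (hli i).2; have := (hlam i).2; have := (hlam i).1; have := hw i; omega)]
    split_ifs with h1 h2
    · exfalso; have := (hli i).1; have := (hlam i).1; omega
    · constructor <;> (intros; omega)
    · constructor <;> (intros; omega)
  have hsplit : f t + ∑ i ∈ Finset.univ.erase t, f i = ∑ i, f i :=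
    Finset.add_sum_erase _ f (Finset.mem_univ t)
  have hcard : (Finset.univ.erase t).card = 3 := by
    rw [Finset.card_erase_of_mem (Finset.mem_univ t)]
    simp
  have hbound : ∑ i ∈ Finset.univ.erase t, f i ≤ -3 := by
    calc ∑ i ∈ Finset.univ.erase t, f i ≤ ∑ _i ∈ Finset.univ.erase t, (-1 : ℤ) :=
          Finset.sum_le_sum (fun i hi => (hfi i (Finset.mem_erase.mp hi).1).1)
      _ = -3 := by rw [Finset.sum_const, hcard]; norm_num
  constructor
  · by_contra h0
    have := hft0.2 h0
    omega
  · intro j hj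
    by_contra hbig
    push_neg at hbig
    have hj' : j ∈ Finset.univ.erase t := Finset.mem_erase.mpr ⟨hj, Finset.mem_univ j⟩
    have hsplit2 : f j + ∑ i ∈ (Finset.univ.erase t).erase j, f i
        = ∑ i ∈ Finset.univ.erase t, f i := Finset.add_sum_erase _ f hj'
    have hcard2 : ((Finset.univ.erase t).erase j).card = 2 := by
      rw [Finset.card_erase_of_mem hj', hcard]
    have hbound2 : ∑ i ∈ (Finset.univ.erase t).erase j, f i ≤ -2 := by
      calc ∑ i ∈ (Finset.univ.erase t).erase j, f i
          ≤ ∑ _i ∈ (Finset.univ.erase t).erase j, (-1 : ℤ) :=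
            Finset.sum_le_sum (fun i hi =>
              (hfi i (Finset.mem_erase.mp (Finset.mem_of_mem_erase hi)).1).1)
        _ = -2 := by rw [Finset.sum_const, hcard2]; norm_num
    have hfj : f j ≤ -2 := (hfi j hj).2 hbig
    have := hft0.1
    omega

end GLpq

open GLpq in
/-- Let `x = Σ λ_i x_i − c ∈ S` and `ℓ ∈ [s, s+δ]`. If `2c − ℓ + ℓ_t x_t − x ≥ 0`
for some `t`, then `λ_t = 0`, `λ_j ≥ 1` and `λ_j + ℓ_j ≤ p_j` for all `j ≠ t`,
and `2c − ℓ + ℓ_i x_i − x ≥ 0` fails for every `i ≠ t`. -/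
theorem case_lambda_neg_one (p q : ℤ) (hp : 2 ≤ p) (hq : 2 ≤ q)
    (lam : Fin 4 → ℤ)
    (hlam : ∀ i, 0 ≤ lam i ∧ lam i < w p q i)
    (hS : 0 < 2 * (-1 : ℤ) + ((Finset.univ.filter fun i => 1 ≤ lam i).card : ℤ) ∧
      2 * (-1 : ℤ) + ((Finset.univ.filter fun i => 1 ≤ lam i).card : ℤ) ≤
        ((({2, 3} : Finset (Fin 4)).filter fun i => lam i = 0 ∨ lam i = 1).card : ℤ))
    (l : Fin 4 → ℤ) (hl : inInterval p q l) (t : Fin 4)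
    (ht : (2 : ℤ) • C p q - elt p q l + l t • X p q t - (elt p q lam - C p q) ∈
      pos p q) :
    lam t = 0 ∧
    (∀ j, j ≠ t → 1 ≤ lam j ∧ lam j + l j ≤ w p q j) ∧
    (∀ i, i ≠ t →
      ¬ ((2 : ℤ) • C p q - elt p q l + l i • X p q i - (elt p q lam - C p q) ∈
        pos p q)) := by
  obtain ⟨h1, h2⟩ := key hp hq hlam hl t ht
  have hcard : 3 ≤ (Finset.univ.filter fun i => 1 ≤ lam i).card := by
    have := hS.1
    omega
  have hge1 : ∀ j, j ≠ t → 1 ≤ lam j := by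
    intro j hj
    by_contra hj1
    push_neg at hj1
    have hsub : ({t, j} : Finset (Fin 4)) ⊆
        Finset.univ.filter (fun i => ¬ 1 ≤ lam i) := by
      intro i hi
      simp only [Finset.mem_insert, Finset.mem_singleton] at hi
      rcases hi with rfl | rfl <;> simp <;> omega
    have h2card : ({t, j} : Finset (Fin 4)).card = 2 := by
      rw [Finset.card_insert_of_notMem (by simpa using hj.symm)]
      simp
    have hle := Finset.card_le_card hsub
    rw [h2card] at hle
    have htot := Finset.card_filter_add_card_filter_not
      (s := (Finset.univ : Finset (Fin 4))) (fun i => 1 ≤ lam i)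
    simp only [Finset.card_univ, Fintype.card_fin] at htot
    omega
  refine ⟨h1, fun j hj => ⟨hge1 j hj, h2 j hj⟩, fun i hi hmem => ?_⟩
  have := (key hp hq hlam hl i hmem).1
  have := hge1 i hi
  omega
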